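/- arXiv:1806.03333 — 2 statements merged into one kernel-verified Lean document; each statement's English description precedes it below -/
import Mathlib

section
/- The number s(n) of RNA secondary structures on n vertices (partial matchings of {1,...,n} whose arcs (i,j) satisfy j−i ≥ 2 and are pairwise non-crossing, i.e. there are no arcs (i1,j1),(i2,j2) with i1 < i2 < j1 < j2) satisfies the recursion s(n+1) = s(n) + Σ_{k=0}^{n−2} s(k)·s(n−1−k) for n ≥ 1, with s(0)=s(1)=1. -/
open Finset

/-- An RNA secondary structure on vertices `{1,…,n}` with minimum arc-length `lam`
and minimum stack-length `r`, given as a finite set of arcs `(i,j)`, `i < j`. -/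
def IsSecStr (lam r n : ℕ) (M : Finset (ℕ × ℕ)) : Prop :=
  (∀ p ∈ M, 1 ≤ p.1 ∧ p.1 < p.2 ∧ p.2 ≤ n ∧ lam ≤ p.2 - p.1) ∧
  (∀ p ∈ M, ∀ q ∈ M, p ≠ q → p.1 ≠ q.1 ∧ p.1 ≠ q.2 ∧ p.2 ≠ q.1 ∧ p.2 ≠ q.2) ∧
  (∀ p ∈ M, ∀ q ∈ M, ¬(p.1 < q.1 ∧ q.1 < p.2 ∧ p.2 < q.2)) ∧
  (∀ p ∈ M, (p.1 - 1, p.2 + 1) ∉ M → ∀ t < r, (p.1 + t, p.2 - t) ∈ M)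

/-- Irreducible: a single vertex, or an arc joining the first and last vertex. -/
def IsIrred (lam r n : ℕ) (M : Finset (ℕ × ℕ)) : Prop :=
  IsSecStr lam r n M ∧ ((n = 1 ∧ M = ∅) ∨ (1, n) ∈ M)

/-- Number of secondary structures on `n` vertices. -/
noncomputable def numStr (lam r n : ℕ) : ℕ := Set.ncard {M | IsSecStr lam r n M}

/-- Number of irreducible secondary structures on `n` vertices. -/
noncomputable def numIrr (lam r n : ℕ) : ℕ := Set.ncard {M | IsIrred lam r n M}

/-- The rainbows of `M`: arcs maximal with respect to the nesting order. -/
def rainbowSet (M : Finset (ℕ × ℕ)) : Finset (ℕ × ℕ) :=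
  M.filter (fun p => ∀ q ∈ M, q.1 ≤ p.1 → p.2 ≤ q.2 → q = p)

/-- Length of the longest rainbow (0 if there is none). -/
def longestRainbow (M : Finset (ℕ × ℕ)) : ℕ := (rainbowSet M).sup (fun p => p.2 - p.1)

/-- The number of rainbows of length `k`. -/
def numRainbows (k : ℕ) (M : Finset (ℕ × ℕ)) : ℕ :=
  ((rainbowSet M).filter (fun p => p.2 - p.1 = k)).card

/-- Probability of an event under the uniform distribution on secondary structures. -/
noncomputable def probEvent (lam r n : ℕ) (A : Finset (ℕ × ℕ) → Prop) : ℝ :=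
  (Set.ncard {M | IsSecStr lam r n M ∧ A M} : ℝ) / (Set.ncard {M | IsSecStr lam r n M} : ℝ)

/-! The vertex `n + 1` is either unpaired, leaving a structure on `n` vertices, or paired with
some `k + 1` where `k ≤ n - 2`. In the second case no arc can cross `(k + 1, n + 1)`, so the
structure splits into a structure on the `k` vertices to the left of the arc and a structure
on the `n - 1 - k` vertices beneath it, translated by `k + 1`; conversely any such pair glues
back. This bijection gives the term `s(k) s(n - 1 - k)`. -/

theorem numStr_of_le_one (lam r : ℕ) {n : ℕ} (hn : n ≤ 1) : numStr lam r n = 1 := by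
  have : {M | IsSecStr lam r n M} = {∅} := by
    ext M
    simp only [Set.mem_ofPred_eq, Set.mem_singleton_iff]
    constructor
    · intro hM
      exact eq_empty_of_forall_notMem fun p hp => by have := hM.1 p hp; omega
    · rintro rfl
      simp [IsSecStr]
  rw [numStr, this, Set.ncard_singleton]

open Classical in
noncomputable def secStrs (lam n : ℕ) : Finset (Finset (ℕ × ℕ)) :=
  (Icc 1 n ×ˢ Icc 1 n).powerset.filter (IsSecStr lam 1 n)

def CompatibleArcs (p q : ℕ × ℕ) : Prop :=
  p.1 ≠ q.1 ∧ p.1 ≠ q.2 ∧ p.2 ≠ q.1 ∧ p.2 ≠ q.2 ∧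
    ¬(p.1 < q.1 ∧ q.1 < p.2 ∧ p.2 < q.2) ∧ ¬(q.1 < p.1 ∧ p.1 < q.2 ∧ q.2 < p.2)

instance : Std.Symm CompatibleArcs :=
  ⟨fun _ _ h => by unfold CompatibleArcs at *; omega⟩

theorem compatibleArcs_of_lt {p q : ℕ × ℕ} (hp : p.1 < p.2) (hpq : p.2 < q.1) (hq : q.1 < q.2) :
    CompatibleArcs p q := by
  unfold CompatibleArcs; omega

theorem compatibleArcs_of_nested {p q : ℕ × ℕ} (h₁ : p.1 < q.1) (hq : q.1 < q.2)
    (h₂ : q.2 < p.2) : CompatibleArcs p q := by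
  unfold CompatibleArcs; omega

def shiftArcs (m : ℕ) (A : Finset (ℕ × ℕ)) : Finset (ℕ × ℕ) :=
  A.image (Prod.map (· + m) (· + m))

def unshiftArcs (m : ℕ) (A : Finset (ℕ × ℕ)) : Finset (ℕ × ℕ) :=
  A.image (Prod.map (· - m) (· - m))

def glueArcs (k n : ℕ) (A B : Finset (ℕ × ℕ)) : Finset (ℕ × ℕ) :=
  insert (k + 1, n + 1) (A ∪ shiftArcs (k + 1) B)

def splitArcs (k : ℕ) (M : Finset (ℕ × ℕ)) : Finset (ℕ × ℕ) × Finset (ℕ × ℕ) :=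
  (M.filter (·.2 ≤ k), unshiftArcs (k + 1) (M.filter (k + 1 < ·.1)))

section

variable {lam n m k : ℕ} {M A B : Finset (ℕ × ℕ)} {p : ℕ × ℕ}

theorem mem_shiftArcs : p ∈ shiftArcs m A ↔ m ≤ p.1 ∧ m ≤ p.2 ∧ (p.1 - m, p.2 - m) ∈ A := by
  constructor
  · intro hp
    obtain ⟨q, hq, rfl⟩ := mem_image.1 hp
    simpa using hq
  · rintro ⟨h₁, h₂, hp⟩
    refine mem_image.2 ⟨_, hp, ?_⟩
    ext <;> simp <;> omega

theorem unshiftArcs_shiftArcs : unshiftArcs m (shiftArcs m A) = A := by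
  rw [unshiftArcs, shiftArcs, image_image]
  refine (image_congr fun p _ => ?_).trans image_id
  ext <;> simp

theorem shiftArcs_unshiftArcs (h : ∀ p ∈ A, m ≤ p.1 ∧ m ≤ p.2) :
    shiftArcs m (unshiftArcs m A) = A := by
  rw [shiftArcs, unshiftArcs, image_image]
  refine (image_congr fun p hp => ?_).trans image_id
  have := h p hp
  ext <;> simp <;> omega

/-- With stack length `1` the stacking condition of `IsSecStr` is vacuous. -/
theorem isSecStr_one_iff : IsSecStr lam 1 n M ↔
    (∀ p ∈ M, 1 ≤ p.1 ∧ p.1 < p.2 ∧ p.2 ≤ n ∧ lam ≤ p.2 - p.1) ∧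
      (M : Set (ℕ × ℕ)).Pairwise CompatibleArcs := by
  constructor
  · rintro ⟨harc, hdisj, hcross, -⟩
    refine ⟨harc, fun p hp q hq hpq => ?_⟩
    have := hdisj p hp q hq hpq
    have := hcross p hp q hq
    have := hcross q hq p hp
    unfold CompatibleArcs
    omega
  · rintro ⟨harc, hpair⟩
    refine ⟨harc, fun p hp q hq hpq => ?_, fun p hp q hq => ?_, fun p hp _ t ht => ?_⟩
    · have := hpair hp hq hpq
      unfold CompatibleArcs at this
      omega
    · by_cases hpq : p = q
      · subst hpq
        omega
      · have := hpair hp hq hpq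
        unfold CompatibleArcs at this
        omega
    · obtain rfl : t = 0 := by omega
      simpa using hp

theorem IsSecStr.arc (hM : IsSecStr lam 1 n M) (hp : p ∈ M) :
    1 ≤ p.1 ∧ p.1 < p.2 ∧ p.2 ≤ n ∧ lam ≤ p.2 - p.1 :=
  hM.1 p hp

theorem IsSecStr.compatibleArcs (hM : IsSecStr lam 1 n M) {q : ℕ × ℕ} (hp : p ∈ M) (hq : q ∈ M)
    (hpq : p ≠ q) : CompatibleArcs p q :=
  (isSecStr_one_iff.1 hM).2 hp hq hpq

theorem IsSecStr.of_subset (hM : IsSecStr lam 1 n M) (hAM : A ⊆ M) (hA : ∀ p ∈ A, p.2 ≤ m) :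
    IsSecStr lam 1 m A := by
  refine isSecStr_one_iff.2 ⟨fun p hp => ?_, (isSecStr_one_iff.1 hM).2.mono (by simpa)⟩
  have := hM.arc (hAM hp)
  have := hA p hp
  omega

theorem IsSecStr.mono (hA : IsSecStr lam 1 m A) (hmn : m ≤ n) : IsSecStr lam 1 n A :=
  hA.of_subset subset_rfl fun _ hp => (hA.arc hp).2.2.1.trans hmn

theorem IsSecStr.union (hA : IsSecStr lam 1 n A) (hB : IsSecStr lam 1 n B)
    (hAB : ∀ p ∈ A, ∀ q ∈ B, CompatibleArcs p q) : IsSecStr lam 1 n (A ∪ B) := by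
  rw [isSecStr_one_iff, coe_union, Set.pairwise_union_of_symm]
  refine ⟨fun p hp => ?_, (isSecStr_one_iff.1 hA).2, (isSecStr_one_iff.1 hB).2,
    fun p hp q hq _ => hAB p hp q hq⟩
  rcases mem_union.1 hp with hp | hp
  exacts [hA.arc hp, hB.arc hp]

theorem IsSecStr.insert (hM : IsSecStr lam 1 n M)
    (hp : 1 ≤ p.1 ∧ p.1 < p.2 ∧ p.2 ≤ n ∧ lam ≤ p.2 - p.1)
    (hpM : ∀ q ∈ M, CompatibleArcs p q) : IsSecStr lam 1 n (insert p M) := by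
  rw [isSecStr_one_iff, coe_insert, Set.pairwise_insert_of_symm]
  refine ⟨fun q hq => ?_, (isSecStr_one_iff.1 hM).2, fun q hq _ => hpM q hq⟩
  rcases mem_insert.1 hq with rfl | hq
  exacts [hp, hM.arc hq]

theorem IsSecStr.shift (hA : IsSecStr lam 1 n A) (m : ℕ) :
    IsSecStr lam 1 (n + m) (shiftArcs m A) := by
  refine isSecStr_one_iff.2 ⟨fun p hp => ?_, ?_⟩
  · obtain ⟨-, -, hp⟩ := mem_shiftArcs.1 hp
    have := hA.arc hp
    dsimp only at this
    omega
  · rintro _ hp' _ hq' hpq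
    obtain ⟨p, hp, rfl⟩ := mem_image.1 hp'
    obtain ⟨q, hq, rfl⟩ := mem_image.1 hq'
    have := hA.compatibleArcs hp hq (by rintro rfl; exact hpq rfl)
    unfold CompatibleArcs at *
    simp only [Prod.map_fst, Prod.map_snd]
    omega

theorem IsSecStr.unshift (hA : IsSecStr lam 1 n A) (hm : ∀ p ∈ A, m < p.1) :
    IsSecStr lam 1 (n - m) (unshiftArcs m A) := by
  refine isSecStr_one_iff.2 ⟨?_, ?_⟩
  · rintro _ hp'
    obtain ⟨p, hp, rfl⟩ := mem_image.1 hp'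
    have := hA.arc hp
    have := hm p hp
    simp only [Prod.map_fst, Prod.map_snd]
    omega
  · rintro _ hp' _ hq' hpq
    obtain ⟨p, hp, rfl⟩ := mem_image.1 hp'
    obtain ⟨q, hq, rfl⟩ := mem_image.1 hq'
    have := hA.compatibleArcs hp hq (by rintro rfl; exact hpq rfl)
    have := hA.arc hp
    have := hA.arc hq
    have := hm p hp
    have := hm q hq
    unfold CompatibleArcs at *
    simp only [Prod.map_fst, Prod.map_snd]
    omega

theorem mem_secStrs : M ∈ secStrs lam n ↔ IsSecStr lam 1 n M := by
  simp only [secStrs, mem_filter, mem_powerset, and_iff_right_iff_imp]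
  intro hM p hp
  have := hM.arc hp
  simp only [mem_product, mem_Icc]
  omega

theorem numStr_eq_card : numStr lam 1 n = (secStrs lam n).card := by
  rw [numStr, ← Set.ncard_coe_finset]
  congr
  ext M
  simp [mem_secStrs]

theorem IsSecStr.lt_fst_of_mem_shiftArcs (hB : IsSecStr lam 1 n B)
    (hp : p ∈ shiftArcs m B) : m < p.1 := by
  obtain ⟨h, -, hp⟩ := mem_shiftArcs.1 hp
  have := hB.arc hp
  dsimp only at this
  omega

theorem IsSecStr.eq_or_snd_le_or_inside (hM : IsSecStr lam 1 (n + 1) M)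
    (hk : (k + 1, n + 1) ∈ M) (hp : p ∈ M) :
    p = (k + 1, n + 1) ∨ p.2 ≤ k ∨ (k + 1 < p.1 ∧ p.2 ≤ n) := by
  by_cases hpk : p = (k + 1, n + 1)
  · exact Or.inl hpk
  have := hM.arc hp
  have := hM.compatibleArcs hp hk hpk
  unfold CompatibleArcs at this
  dsimp only at this
  omega

theorem isSecStr_glueArcs (hA : IsSecStr lam 1 k A) (hB : IsSecStr lam 1 (n - 1 - k) B)
    (hkn : k < n) (hk : lam ≤ n - k) : IsSecStr lam 1 (n + 1) (glueArcs k n A B) := by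
  have hB' := hB.shift (k + 1)
  have hinside (q) (hq : q ∈ shiftArcs (k + 1) B) : k + 1 < q.1 ∧ q.1 < q.2 ∧ q.2 ≤ n := by
    have := hB.lt_fst_of_mem_shiftArcs hq
    have := hB'.arc hq
    omega
  refine ((hA.mono (by omega)).union (hB'.mono (by omega)) fun p hp q hq => ?_).insert
    (by dsimp only; omega) fun q hq => ?_
  · have := hA.arc hp
    have := hinside q hq
    exact compatibleArcs_of_lt (by omega) (by omega) (by omega)
  · rcases mem_union.1 hq with hq | hq
    · have := hA.arc hq
      exact Std.Symm.symm _ _ (compatibleArcs_of_lt (by omega) (by omega) (by omega))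
    · have := hinside q hq
      exact compatibleArcs_of_nested (by omega) (by omega) (by omega)

theorem isSecStr_splitArcs (hM : IsSecStr lam 1 (n + 1) M) (hk : (k + 1, n + 1) ∈ M) :
    IsSecStr lam 1 k (splitArcs k M).1 ∧ IsSecStr lam 1 (n - 1 - k) (splitArcs k M).2 := by
  refine ⟨hM.of_subset (filter_subset _ _) fun p hp => (mem_filter.1 hp).2, ?_⟩
  have hinside : IsSecStr lam 1 n (M.filter (k + 1 < ·.1)) :=
    hM.of_subset (filter_subset _ _) fun p hp => by
      obtain ⟨hp, hlt⟩ := mem_filter.1 hp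
      have := hM.arc hp
      rcases hM.eq_or_snd_le_or_inside hk hp with rfl | h | h <;> omega
  rw [Nat.sub_sub, Nat.add_comm 1 k]
  exact hinside.unshift fun p hp => (mem_filter.1 hp).2

theorem glueArcs_splitArcs (hM : IsSecStr lam 1 (n + 1) M) (hk : (k + 1, n + 1) ∈ M) :
    glueArcs k n (splitArcs k M).1 (splitArcs k M).2 = M := by
  rw [glueArcs, splitArcs, shiftArcs_unshiftArcs fun p hp => by
    obtain ⟨hp, hlt⟩ := mem_filter.1 hp
    have := hM.arc hp
    omega]
  ext p
  simp only [mem_insert, mem_union, mem_filter]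
  constructor
  · rintro (rfl | ⟨hp, -⟩ | ⟨hp, -⟩) <;> assumption
  · intro hp
    rcases hM.eq_or_snd_le_or_inside hk hp with h | h | h
    exacts [Or.inl h, Or.inr (Or.inl ⟨hp, h⟩), Or.inr (Or.inr ⟨hp, h.1⟩)]

theorem splitArcs_glueArcs (hA : IsSecStr lam 1 k A) (hB : IsSecStr lam 1 m B)
    (hkn : k ≤ n) :
    splitArcs k (glueArcs k n A B) = (A, B) := by
  have hB' := hB.shift (k + 1)
  have hleft : (glueArcs k n A B).filter (·.2 ≤ k) = A := by
    rw [glueArcs, filter_insert, if_neg (by dsimp only; omega), filter_union,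
      filter_true_of_mem fun p hp => (hA.arc hp).2.2.1,
      filter_false_of_mem fun q hq => by
        have := hB.lt_fst_of_mem_shiftArcs hq
        have := hB'.arc hq
        omega,
      union_empty]
  have hright : (glueArcs k n A B).filter (k + 1 < ·.1) = shiftArcs (k + 1) B := by
    rw [glueArcs, filter_insert, if_neg (lt_irrefl _), filter_union,
      filter_false_of_mem fun p hp => by have := hA.arc hp; omega,
      filter_true_of_mem fun q hq => hB.lt_fst_of_mem_shiftArcs hq, empty_union]
  rw [splitArcs, hleft, hright, unshiftArcs_shiftArcs]

theorem card_filter_mem_secStrs (hkn : k < n) (hk : lam ≤ n - k) :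
    ((secStrs lam (n + 1)).filter ((k + 1, n + 1) ∈ ·)).card =
      (secStrs lam k).card * (secStrs lam (n - 1 - k)).card := by
  rw [← card_product]
  refine card_nbij' (splitArcs k) (fun AB => glueArcs k n AB.1 AB.2) ?_ ?_ ?_ ?_
  · intro M hM
    obtain ⟨hM, hkM⟩ := mem_filter.1 hM
    obtain ⟨hA, hB⟩ := isSecStr_splitArcs (mem_secStrs.1 hM) hkM
    exact mem_product.2 ⟨mem_secStrs.2 hA, mem_secStrs.2 hB⟩
  · rintro ⟨A, B⟩ hAB
    obtain ⟨hA, hB⟩ := mem_product.1 hAB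
    exact mem_filter.2 ⟨mem_secStrs.2 (isSecStr_glueArcs (mem_secStrs.1 hA) (mem_secStrs.1 hB)
      hkn hk), mem_insert_self _ _⟩
  · intro M hM
    obtain ⟨hM, hkM⟩ := mem_filter.1 hM
    exact glueArcs_splitArcs (mem_secStrs.1 hM) hkM
  · rintro ⟨A, B⟩ hAB
    obtain ⟨hA, hB⟩ := mem_product.1 hAB
    exact splitArcs_glueArcs (mem_secStrs.1 hA) (mem_secStrs.1 hB) hkn.le

theorem secStrs_succ : secStrs lam (n + 1) = secStrs lam n ∪
    (range (n + 1 - lam)).biUnion fun k => (secStrs lam (n + 1)).filter ((k + 1, n + 1) ∈ ·) := by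
  ext M
  simp only [mem_union, mem_biUnion, mem_range, mem_filter, mem_secStrs]
  constructor
  · intro hM
    by_cases hend : ∃ p ∈ M, p.2 = n + 1
    · obtain ⟨p, hp, hpn⟩ := hend
      have := hM.arc hp
      refine Or.inr ⟨p.1 - 1, by omega, hM, ?_⟩
      convert hp using 1
      ext <;> simp <;> omega
    · push Not at hend
      refine Or.inl (hM.of_subset subset_rfl fun p hp => ?_)
      have := hM.arc hp
      have := hend p hp
      omega
  · rintro (hM | ⟨k, -, hM, -⟩)
    exacts [hM.mono n.le_succ, hM]

theorem numStr_succ (hlam : 1 ≤ lam) (n : ℕ) :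
    numStr lam 1 (n + 1) =
      numStr lam 1 n + ∑ k ∈ range (n + 1 - lam), numStr lam 1 k * numStr lam 1 (n - 1 - k) := by
  simp only [numStr_eq_card]
  rw [secStrs_succ, card_union_of_disjoint, card_biUnion]
  · refine congrArg _ (sum_congr rfl fun k hk => ?_)
    rw [mem_range] at hk
    exact card_filter_mem_secStrs (by omega) (by omega)
  · intro a _ b _ hab
    refine disjoint_left.2 fun M ha hb => ?_
    obtain ⟨hM, ha⟩ := mem_filter.1 ha
    have := (mem_secStrs.1 hM).compatibleArcs ha (mem_filter.1 hb).2 (by simpa using hab)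
    exact this.2.2.2.1 rfl
  · refine disjoint_left.2 fun M hM hM' => ?_
    obtain ⟨k, -, hk⟩ := mem_biUnion.1 hM'
    have := (mem_secStrs.1 hM).arc (mem_filter.1 hk).2
    dsimp only at this
    omega

end

theorem secondary_structure_recursion :
    numStr 2 1 0 = 1 ∧ numStr 2 1 1 = 1 ∧
    ∀ n : ℕ, 1 ≤ n →
      numStr 2 1 (n + 1) =
        numStr 2 1 n + ∑ k ∈ Finset.range (n - 1), numStr 2 1 k * numStr 2 1 (n - 1 - k) := by
  refine ⟨numStr_of_le_one 2 1 zero_le_one, numStr_of_le_one 2 1 le_rfl, fun n _ => ?_⟩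
  rw [numStr_succ one_le_two n, show n + 1 - 2 = n - 1 by omega]
end

section
/- Let Φ(x) = 1/(1−x) and let F(x) be a formal power series with F(0)=0 and nonnegative coefficients, and define S_{≤m}(x) = Φ(F_{≤m}(x)) where F_{≤m}(x) is the truncation of F to degree ≤ m. Then for all n and all k with 1 ≤ k ≤ n/2: [x^n](S_{≤n−k+1}(x) − S_{≤n−k}(x)) = ([x^{k−1}] Φ'(F(x))) · ([x^{n−k+1}] F(x)), where Φ'(x) = 1/(1−x)². -/
/-! Put `m = n - k + 1`, `A = F_{≤m}` and `B = F_{≤m-1}`. Then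
`(1 - A)⁻¹ - (1 - B)⁻¹ = (1 - A)⁻¹ (1 - B)⁻¹ (A - B)` and `A - B = f(m) X^m`, so the coefficient
of `X^n` is `f(m)` times the coefficient of `X^(k-1)` in `(1 - A)⁻¹ (1 - B)⁻¹`. Since `k ≤ m`, both
`A` and `B` agree with `F` modulo `X^k`, and inversion respects congruences modulo `X^k`, so that
coefficient is the one of `(1 - F)⁻²`. -/

namespace PowerSeries

section CommRing

variable {R : Type*} [CommRing R]

theorem X_pow_dvd_sub_trunc (f : R⟦X⟧) (n : ℕ) : X ^ n ∣ f - (trunc n f : R⟦X⟧) := by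
  rw [X_pow_dvd_iff]
  intro i hi
  rw [map_sub, Polynomial.coeff_coe, coeff_trunc, if_pos hi, sub_self]

theorem coe_trunc_succ_sub_coe_trunc (f : R⟦X⟧) (n : ℕ) :
    (trunc (n + 1) f : R⟦X⟧) - (trunc n f : R⟦X⟧) = C (coeff n f) * X ^ n := by
  rw [trunc_succ, Polynomial.coe_add, add_sub_cancel_left, Polynomial.coe_monomial,
    monomial_eq_C_mul_X_pow]

theorem coeff_eq_of_X_pow_dvd_sub {f g : R⟦X⟧} {d : ℕ} (h : X ^ (d + 1) ∣ f - g) :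
    coeff d f = coeff d g :=
  sub_eq_zero.1 (by simpa only [map_sub] using X_pow_dvd_iff.1 h d d.lt_succ_self)

end CommRing

section Field

variable {K : Type*} [Field K]

theorem inv_sub_inv {φ ψ : K⟦X⟧} (hφ : constantCoeff φ ≠ 0) (hψ : constantCoeff ψ ≠ 0) :
    φ⁻¹ - ψ⁻¹ = φ⁻¹ * ψ⁻¹ * (ψ - φ) := by
  calc φ⁻¹ - ψ⁻¹ = φ⁻¹ * (ψ * ψ⁻¹) - (φ * φ⁻¹) * ψ⁻¹ := by
        rw [PowerSeries.mul_inv_cancel ψ hψ, PowerSeries.mul_inv_cancel φ hφ, mul_one, one_mul]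
    _ = φ⁻¹ * ψ⁻¹ * (ψ - φ) := by ring

theorem X_pow_dvd_inv_sub_inv {φ ψ : K⟦X⟧} {d : ℕ} (h : X ^ d ∣ φ - ψ) :
    X ^ d ∣ φ⁻¹ - ψ⁻¹ := by
  obtain rfl | hd := Nat.eq_zero_or_pos d
  · simp
  have hc : constantCoeff φ = constantCoeff ψ := by
    simpa using coeff_eq_of_X_pow_dvd_sub ((pow_dvd_pow X hd).trans h)
  by_cases hφ : constantCoeff φ = 0
  · rw [inv_eq_zero.2 hφ, inv_eq_zero.2 (hc ▸ hφ), sub_zero]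
    exact dvd_zero _
  rw [inv_sub_inv hφ (hc ▸ hφ), ← neg_sub φ, mul_neg]
  exact (h.mul_left _).neg_right

end Field

end PowerSeries

open PowerSeries in
theorem truncated_structure_coefficient_identity_general (F : PowerSeries ℚ)
    (h0 : PowerSeries.constantCoeff F = 0)
    (n k : ℕ) (hk : 1 ≤ k) (hkn : 2 * k ≤ n) :
    PowerSeries.coeff n
        ((1 - ((PowerSeries.trunc (n - k + 2) F : Polynomial ℚ) : PowerSeries ℚ))⁻¹
          - (1 - ((PowerSeries.trunc (n - k + 1) F : Polynomial ℚ) : PowerSeries ℚ))⁻¹)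
      = PowerSeries.coeff (k - 1) (((1 - F)⁻¹) ^ 2) * PowerSeries.coeff (n - k + 1) F := by
  set m := n - k + 1
  have hk_le_m : k ≤ m := by omega
  have hn : n = k - 1 + m := by omega
  rw [show n - k + 2 = m + 1 by omega]
  set A : ℚ⟦X⟧ := ((trunc (m + 1) F : Polynomial ℚ) : ℚ⟦X⟧)
  set B : ℚ⟦X⟧ := ((trunc m F : Polynomial ℚ) : ℚ⟦X⟧)
  have hA : X ^ k ∣ (1 - A) - (1 - F) := by
    rw [sub_sub_sub_cancel_left]
    exact (pow_dvd_pow X (by omega)).trans (X_pow_dvd_sub_trunc F (m + 1))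
  have hB : X ^ k ∣ (1 - B) - (1 - F) := by
    rw [sub_sub_sub_cancel_left]
    exact (pow_dvd_pow X hk_le_m).trans (X_pow_dvd_sub_trunc F m)
  have hunit : ∀ G : ℚ⟦X⟧, X ^ k ∣ (1 - G) - (1 - F) → constantCoeff (1 - G) ≠ 0 := by
    intro G hG
    rw [← coeff_zero_eq_constantCoeff_apply,
      coeff_eq_of_X_pow_dvd_sub ((pow_dvd_pow X hk).trans hG)]
    simp [h0]
  have hprod : X ^ k ∣ (1 - A)⁻¹ * (1 - B)⁻¹ - (1 - F)⁻¹ ^ 2 := by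
    rw [sq]
    exact dvd_mul_sub_mul (X_pow_dvd_inv_sub_inv hA) (X_pow_dvd_inv_sub_inv hB)
  rw [PowerSeries.inv_sub_inv (hunit A hA) (hunit B hB), sub_sub_sub_cancel_left,
    coe_trunc_succ_sub_coe_trunc, hn, ← mul_assoc, coeff_mul_X_pow, coeff_mul_C,
    coeff_eq_of_X_pow_dvd_sub (by rwa [Nat.sub_add_cancel hk])]

open PowerSeries in
/-- Key coefficient identity: for `1 ≤ k ≤ n/2`,
`[x^n](S_{≤n−k+1} − S_{≤n−k}) = ([x^{k−1}]Φ'(F))·([x^{n−k+1}]F)`,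
where `S_{≤m} = Φ(F_{≤m})`, `Φ(y) = 1/(1−y)`, `Φ'(y) = 1/(1−y)²`. -/
theorem truncated_structure_coefficient_identity (F : PowerSeries ℚ)
    (h0 : PowerSeries.constantCoeff F = 0)
    (hpos : ∀ i : ℕ, 0 ≤ PowerSeries.coeff i F)
    (n k : ℕ) (hk : 1 ≤ k) (hkn : 2 * k ≤ n) :
    PowerSeries.coeff n
        ((1 - ((PowerSeries.trunc (n - k + 2) F : Polynomial ℚ) : PowerSeries ℚ))⁻¹
          - (1 - ((PowerSeries.trunc (n - k + 1) F : Polynomial ℚ) : PowerSeries ℚ))⁻¹)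
      = PowerSeries.coeff (k - 1) (((1 - F)⁻¹) ^ 2) * PowerSeries.coeff (n - k + 1) F :=
  truncated_structure_coefficient_identity_general F h0 n k hk hkn
end
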